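/- Fix samples ϑ⁽¹⁾, …, ϑ⁽ℓ⁾ ∈ ℝ^m with ℓ ≥ 1, a Wasserstein radius ε ≥ 0, and define h(σ, λ) = λε + (1/ℓ)·Σ_{j=1}^{ℓ} max(0, 1 − λ·max(0, σ − ‖ϑ⁽ʲ⁾‖_∞)) for σ ≥ 0 and λ ≥ 0, and let M = max_{1 ≤ j ≤ ℓ} ‖ϑ⁽ʲ⁾‖_∞. Then for every σ > M one has inf_{λ ≥ 0} h(σ, λ) ≤ ε/(σ − M); in particular inf_{λ ≥ 0} h(σ, λ) → 0 as σ → ∞. -/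

import Mathlib

/-!
At `λ = 1/(σ - M)` every hinge `max 0 (1 - λ (σ - ‖ϑ⁽ʲ⁾‖))` vanishes, because
`σ - ‖ϑ⁽ʲ⁾‖ ≥ σ - M`; so the objective there equals `ε/(σ - M)`, which bounds the infimum.
The infimum is nonnegative, and squeezing gives the limit.
-/

open Finset Filter Topology

section HingeObjective

variable {ι : Type*} [Fintype ι] (a : ι → ℝ) (c ε σ : ℝ)

def hingeObjective (lam : ℝ) : ℝ :=
  lam * ε + c * ∑ j, max 0 (1 - lam * max 0 (σ - a j))

noncomputable def worstCaseRisk : ℝ :=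
  sInf {y : ℝ | ∃ lam : ℝ, 0 ≤ lam ∧ y = hingeObjective a c ε σ lam}

variable {a c ε σ}

theorem hingeObjective_nonneg (hc : 0 ≤ c) (hε : 0 ≤ ε) {lam : ℝ} (hlam : 0 ≤ lam) :
    0 ≤ hingeObjective a c ε σ lam :=
  add_nonneg (mul_nonneg hlam hε)
    (mul_nonneg hc (sum_nonneg fun _ _ => le_max_left _ _))

theorem hingeObjective_inv_sub_eq {M : ℝ} (hM : ∀ j, a j ≤ M) (hσ : M < σ) :
    hingeObjective a c ε σ (σ - M)⁻¹ = ε / (σ - M) := by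
  have hpos : 0 < σ - M := sub_pos.mpr hσ
  have hinge_eq_zero : ∀ j, max 0 (1 - (σ - M)⁻¹ * max 0 (σ - a j)) = 0 := fun j => by
    have hgap : σ - M ≤ σ - a j := by linarith [hM j]
    rw [max_eq_right (hpos.le.trans hgap)]
    refine max_eq_left (sub_nonpos.mpr ?_)
    rwa [inv_mul_eq_div, one_le_div hpos]
  simp only [hingeObjective, hinge_eq_zero, sum_const_zero, mul_zero, add_zero]
  rw [inv_mul_eq_div]

theorem worstCaseRisk_nonneg (hc : 0 ≤ c) (hε : 0 ≤ ε) : 0 ≤ worstCaseRisk a c ε σ :=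
  Real.sInf_nonneg fun _ ⟨_, hlam, hy⟩ => hy ▸ hingeObjective_nonneg hc hε hlam

theorem worstCaseRisk_le {M : ℝ} (hc : 0 ≤ c) (hε : 0 ≤ ε) (hM : ∀ j, a j ≤ M)
    (hσ : M < σ) : worstCaseRisk a c ε σ ≤ ε / (σ - M) := by
  refine csInf_le ⟨0, fun _ ⟨_, hlam, hy⟩ => hy ▸ hingeObjective_nonneg hc hε hlam⟩ ?_
  exact ⟨(σ - M)⁻¹, inv_nonneg.mpr (sub_pos.mpr hσ).le, (hingeObjective_inv_sub_eq hM hσ).symm⟩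

theorem tendsto_worstCaseRisk_atTop {M : ℝ} (hc : 0 ≤ c) (hε : 0 ≤ ε)
    (hM : ∀ j, a j ≤ M) : Tendsto (worstCaseRisk a c ε) atTop (𝓝 0) := by
  have hbound : Tendsto (fun σ : ℝ => ε / (σ - M)) atTop (𝓝 0) :=
    tendsto_const_nhds.div_atTop (tendsto_atTop_add_const_right _ (-M) tendsto_id)
  refine squeeze_zero' (Eventually.of_forall fun _ => worstCaseRisk_nonneg hc hε) ?_ hbound
  filter_upwards [eventually_gt_atTop M] with σ hσ using worstCaseRisk_le hc hε hM hσ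

end HingeObjective

/-- For fixed samples `ϑ⁽¹⁾, …, ϑ⁽ℓ⁾ ∈ ℝ^m` (sup norm `‖·‖_∞`) with `ℓ ≥ 1`, Wasserstein
radius `ε ≥ 0`, `h(σ, λ) = λε + (1/ℓ)·∑_j max(0, 1 − λ·max(0, σ − ‖ϑ⁽ʲ⁾‖_∞))` and
`M = max_j ‖ϑ⁽ʲ⁾‖_∞`: for every `σ > M`, `inf_{λ ≥ 0} h(σ, λ) ≤ ε/(σ − M)`; in particular
`inf_{λ ≥ 0} h(σ, λ) → 0` as `σ → ∞`. -/
theorem stmt7 (m ℓ : ℕ) (hℓ : 1 ≤ ℓ) (ϑ : Fin ℓ → (Fin m → ℝ)) (ε : ℝ) (hε : 0 ≤ ε) :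
    (∀ σ : ℝ,
      (Finset.univ.sup' (Finset.univ_nonempty_iff.mpr ⟨⟨0, hℓ⟩⟩) fun j => ‖ϑ j‖) < σ →
      sInf {y : ℝ | ∃ lam : ℝ, 0 ≤ lam ∧
          y = lam * ε + (1 / (ℓ : ℝ)) * ∑ j, max 0 (1 - lam * max 0 (σ - ‖ϑ j‖))}
        ≤ ε / (σ - Finset.univ.sup' (Finset.univ_nonempty_iff.mpr ⟨⟨0, hℓ⟩⟩) fun j => ‖ϑ j‖)) ∧
    Filter.Tendsto
      (fun σ : ℝ =>
        sInf {y : ℝ | ∃ lam : ℝ, 0 ≤ lam ∧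
          y = lam * ε + (1 / (ℓ : ℝ)) * ∑ j, max 0 (1 - lam * max 0 (σ - ‖ϑ j‖))})
      Filter.atTop (nhds 0) := by
  have hc : (0 : ℝ) ≤ 1 / ℓ := by positivity
  have hM : ∀ j, ‖ϑ j‖ ≤ univ.sup' (univ_nonempty_iff.mpr ⟨⟨0, hℓ⟩⟩) fun j => ‖ϑ j‖ :=
    fun j => le_sup' (fun j => ‖ϑ j‖) (mem_univ j)
  exact ⟨fun σ hσ => worstCaseRisk_le hc hε hM hσ, tendsto_worstCaseRisk_atTop hc hε hM⟩
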